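/- Let g(t) = (1/2)t² cos(2θ₀) + (1/4)log(1 + t⁴ - 2t² cos(2θ₀)). If π/4 < |θ₀| ≤ π/2 - (1/2)arccos((2-√2)/2), then with t_max = √(2cos 2θ₀ - 1/cos 2θ₀), g is strictly increasing on [0, t_max). Moreover t_max · cos θ₀ ≥ 1. -/

import Mathlib

/-!
Write `c = cos 2θ₀`; the hypotheses on `θ₀` give `(√2 - 2)/2 ≤ c < 0`. Then
`g'(t) = t³ (c t² + 1 - 2c²) / (1 + t⁴ - 2c t²)`, whose numerator is positive for
`0 < t² < (2c² - 1)/c = t_max²`. For the second claim, `cos² θ₀ = (1 + c)/2`, and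
`t_max² (1 + c)/2 - 1 = (2c³ + 2c² - 3c - 1)/(2c)`; the cubic factors as
`(2c + 2 - √2)(c² + (√2/2) c - (2 + √2)/2)`, which is `≤ 0` on `[(√2 - 2)/2, 0)`.
-/

open Real Set

lemma one_add_pow_four_sub_pos {c : ℝ} (hc : c < 1) (t : ℝ) :
    0 < 1 + t ^ 4 - 2 * t ^ 2 * c := by
  rcases le_or_gt c 0 with h | h
  · nlinarith [sq_nonneg (t ^ 2), mul_nonneg (sq_nonneg t) (neg_nonneg.2 h)]
  · nlinarith [sq_nonneg (t ^ 2 - c)]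

lemma hasDerivAt_sq_add_log_quartic (c t : ℝ) (hD : 1 + t ^ 4 - 2 * t ^ 2 * c ≠ 0) :
    HasDerivAt (fun t => t ^ 2 / 2 * c + log (1 + t ^ 4 - 2 * t ^ 2 * c) / 4)
      (t ^ 3 * (c * t ^ 2 + 1 - 2 * c ^ 2) / (1 + t ^ 4 - 2 * t ^ 2 * c)) t := by
  have hq : HasDerivAt (fun t : ℝ => 1 + t ^ 4 - 2 * t ^ 2 * c) (4 * t ^ 3 - 4 * t * c) t :=
    (((hasDerivAt_pow 4 t).const_add 1).sub
      (((hasDerivAt_pow 2 t).const_mul 2).mul_const c)).congr_deriv (by push_cast; ring)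
  refine ((((hasDerivAt_pow 2 t).div_const 2).mul_const c).add
    ((hq.log hD).div_const 4)).congr_deriv ?_
  push_cast
  field_simp
  ring

lemma strictMonoOn_sq_add_log_quartic {c : ℝ} (hc : c < 0) :
    StrictMonoOn (fun t => t ^ 2 / 2 * c + log (1 + t ^ 4 - 2 * t ^ 2 * c) / 4)
      (Icc 0 √(2 * c - 1 / c)) := by
  have hD := one_add_pow_four_sub_pos (hc.trans one_pos)
  have hderiv t := hasDerivAt_sq_add_log_quartic c t (hD t).ne'
  refine strictMonoOn_of_deriv_pos (convex_Icc _ _)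
    (fun t _ => (hderiv t).continuousAt.continuousWithinAt) fun t ht => ?_
  rw [interior_Icc] at ht
  rw [(hderiv t).deriv]
  have ht_sq : t ^ 2 < 2 * c - 1 / c := (lt_sqrt ht.1.le).1 ht.2
  have hnum : 0 < c * t ^ 2 + 1 - 2 * c ^ 2 := by
    have h := mul_lt_mul_of_neg_left ht_sq hc
    rw [mul_sub, mul_one_div_cancel hc.ne] at h
    linarith
  exact div_pos (mul_pos (pow_pos ht.1 3) hnum) (hD t)

lemma cos_two_mul_neg_of_pi_div_four_lt_abs {θ : ℝ} (h₁ : π / 4 < |θ|) (h₂ : |θ| ≤ π / 2) :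
    cos (2 * θ) < 0 := by
  rw [← cos_abs, abs_mul, abs_two, ← cos_pi_div_two]
  exact cos_lt_cos_of_nonneg_of_le_pi (by positivity) (by linarith) (by linarith)

lemma neg_le_cos_two_mul_of_abs_le {x θ : ℝ} (hx₁ : -1 ≤ x) (hx₂ : x ≤ 1)
    (h : |θ| ≤ π / 2 - arccos x / 2) : -x ≤ cos (2 * θ) := by
  rw [← cos_abs, abs_mul, abs_two, ← cos_arccos hx₁ hx₂, ← cos_pi_sub]
  exact cos_le_cos_of_nonneg_of_le_pi (by positivity) (by linarith [arccos_nonneg x])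
    (by linarith)

lemma one_le_two_mul_sub_inv_mul_half_add_half {c : ℝ} (hlo : (√2 - 2) / 2 ≤ c) (hneg : c < 0) :
    1 ≤ (2 * c - 1 / c) * (1 / 2 + c / 2) := by
  have hsq : √2 ^ 2 = 2 := sq_sqrt zero_le_two
  have hlt : √2 < 2 := by nlinarith [sqrt_nonneg 2]
  have hc : c ≠ 0 := hneg.ne
  have hfactor : (2 * c - 1 / c) * (1 / 2 + c / 2) - 1
      = (2 * c + 2 - √2) * (c ^ 2 + √2 / 2 * c - (2 + √2) / 2) / (2 * c) := by
    field_simp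
    linear_combination (c - 1) * hsq
  have hnum : (2 * c + 2 - √2) * (c ^ 2 + √2 / 2 * c - (2 + √2) / 2) ≤ 0 :=
    mul_nonpos_of_nonneg_of_nonpos (by linarith) (by nlinarith [sqrt_nonneg 2])
  linarith [div_nonneg_of_nonpos hnum (by linarith : 2 * c ≤ 0)]

theorem stmt_3 (θ₀ : ℝ) (h1 : Real.pi / 4 < |θ₀|)
    (h2 : |θ₀| ≤ Real.pi / 2 - Real.arccos ((2 - Real.sqrt 2) / 2) / 2)
    (g : ℝ → ℝ)
    (hg : g = fun t => t ^ 2 / 2 * Real.cos (2 * θ₀)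
      + Real.log (1 + t ^ 4 - 2 * t ^ 2 * Real.cos (2 * θ₀)) / 4)
    (tmax : ℝ)
    (htmax : tmax = Real.sqrt (2 * Real.cos (2 * θ₀) - 1 / Real.cos (2 * θ₀))) :
    StrictMonoOn g (Set.Ico 0 tmax) ∧ 1 ≤ tmax * Real.cos θ₀ := by
  subst hg htmax
  have hsqrt : √2 ≤ 4 := by nlinarith [sqrt_nonneg 2, sq_sqrt (zero_le_two : (0 : ℝ) ≤ 2)]
  have hθ : |θ₀| ≤ π / 2 := h2.trans (by linarith [arccos_nonneg ((2 - √2) / 2)])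
  have hc_neg := cos_two_mul_neg_of_pi_div_four_lt_abs h1 hθ
  have hc_ge : (√2 - 2) / 2 ≤ cos (2 * θ₀) := by
    have := neg_le_cos_two_mul_of_abs_le (by linarith) (by linarith [sqrt_nonneg 2]) h2
    linarith
  refine ⟨(strictMonoOn_sq_add_log_quartic hc_neg).mono Ico_subset_Icc_self, ?_⟩
  have hcos : 0 ≤ cos θ₀ := cos_nonneg_of_neg_pi_div_two_le_of_le
    (by linarith [neg_abs_le θ₀]) (by linarith [le_abs_self θ₀])
  rw [← sqrt_sq hcos, ← sqrt_mul' _ (sq_nonneg _), one_le_sqrt, cos_sq]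
  exact one_le_two_mul_sub_inv_mul_half_add_half hc_ge hc_neg
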